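/- Opacity transfer via ε-InitSOP simulation (Theorem 5.1): if there is an ε-approximate initial-state opacity preserving simulation relation from S_a to S_b with ε ≤ δ/2, and S_b is (δ − 2ε)-approximate initial-state opaque, then S_a is δ-approximate initial-state opaque. -/
import Mathlib


open Metric Set

section OpacityDefs

variable {X U Y Xa Ua Xb Ub Xc Uc : Type*}

/-- A run of length `n` of the system with transition relation `tr`
(each step uses some input). -/
def IsRun (tr : X → U → X → Prop) (n : ℕ) (x : ℕ → X) : Prop :=
  ∀ i < n, ∃ u, tr (x i) u (x (i + 1))

/-- Exact initial-state opacity. -/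
def ExactInitOpaque {Y : Type*} (X0 XS : Set X) (tr : X → U → X → Prop)
    (H : X → Y) : Prop :=
  ∀ n : ℕ, ∀ x : ℕ → X, x 0 ∈ X0 ∩ XS → IsRun tr n x →
    ∃ x' : ℕ → X, x' 0 ∈ X0 \ XS ∧ IsRun tr n x' ∧ ∀ i ≤ n, H (x i) = H (x' i)

/-- δ-approximate initial-state opacity. -/
def ApproxInitOpaque [MetricSpace Y] (X0 XS : Set X) (tr : X → U → X → Prop)
    (H : X → Y) (δ : ℝ) : Prop :=
  ∀ n : ℕ, ∀ x : ℕ → X, x 0 ∈ X0 ∩ XS → IsRun tr n x →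
    ∃ x' : ℕ → X, x' 0 ∈ X0 \ XS ∧ IsRun tr n x' ∧
      ∀ i ≤ n, dist (H (x i)) (H (x' i)) ≤ δ

/-- δ-approximate current-state opacity. -/
def ApproxCurOpaque [MetricSpace Y] (X0 XS : Set X) (tr : X → U → X → Prop)
    (H : X → Y) (δ : ℝ) : Prop :=
  ∀ n : ℕ, ∀ x : ℕ → X, x 0 ∈ X0 → IsRun tr n x → x n ∈ XS →
    ∃ x' : ℕ → X, x' 0 ∈ X0 ∧ IsRun tr n x' ∧ x' n ∉ XS ∧
      ∀ i ≤ n, dist (H (x i)) (H (x' i)) ≤ δ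

/-- δ-approximate infinite-step opacity. -/
def ApproxInfOpaque [MetricSpace Y] (X0 XS : Set X) (tr : X → U → X → Prop)
    (H : X → Y) (δ : ℝ) : Prop :=
  ∀ n : ℕ, ∀ x : ℕ → X, ∀ k ≤ n, x 0 ∈ X0 → IsRun tr n x → x k ∈ XS →
    ∃ x' : ℕ → X, x' 0 ∈ X0 ∧ IsRun tr n x' ∧ x' k ∉ XS ∧
      ∀ i ≤ n, dist (H (x i)) (H (x' i)) ≤ δ

/-- Standing assumption: no initial state has all its δ-close initial states secret. -/
def StandingAssumption [MetricSpace Y] (X0 XS : Set X) (H : X → Y) (δ : ℝ) : Prop :=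
  ∀ x0 ∈ X0, ¬ ({x ∈ X0 | dist (H x0) (H x) ≤ δ} ⊆ XS)

/-- Predecessors of a set of states (under any input). -/
def PreSet (tr : X → U → X → Prop) (q : Set X) : Set X :=
  {z | ∃ u, ∃ w ∈ q, tr z u w}

/-- Successors of a set of states (under any input). -/
def PostSet (tr : X → U → X → Prop) (q : Set X) : Set X :=
  {z | ∃ u, ∃ w ∈ q, tr w u z}

/-- Initial states of the δ-approximate initial-state estimator. -/
def InitEstInit [MetricSpace Y] (H : X → Y) (δ : ℝ) : Set (X × Set X) :=
  {p | p.2 = {x' | dist (H p.1) (H x') ≤ δ}}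

/-- Transition relation of the δ-approximate initial-state estimator. -/
def InitEstTr [MetricSpace Y] (tr : X → U → X → Prop) (H : X → Y) (δ : ℝ)
    (p : X × Set X) (u : U) (p' : X × Set X) : Prop :=
  tr p'.1 u p.1 ∧ p'.2 = PreSet tr p.2 ∩ {x'' | dist (H p'.1) (H x'') ≤ δ}

/-- Reachable states of the δ-approximate initial-state estimator. -/
def InitEstReach [MetricSpace Y] (tr : X → U → X → Prop) (H : X → Y) (δ : ℝ) :
    Set (X × Set X) :=
  {p | ∃ (n : ℕ) (pr : ℕ → X × Set X) (u : ℕ → U), pr 0 ∈ InitEstInit H δ ∧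
    (∀ i < n, InitEstTr tr H δ (pr i) (u i) (pr (i + 1))) ∧ pr n = p}

/-- Initial states of the δ-approximate current-state estimator. -/
def CurEstInit [MetricSpace Y] (X0 : Set X) (H : X → Y) (δ : ℝ) : Set (X × Set X) :=
  {p | p.1 ∈ X0 ∧ p.2 = {x' ∈ X0 | dist (H p.1) (H x') ≤ δ}}

/-- Transition relation of the δ-approximate current-state estimator. -/
def CurEstTr [MetricSpace Y] (tr : X → U → X → Prop) (H : X → Y) (δ : ℝ)
    (p : X × Set X) (u : U) (p' : X × Set X) : Prop :=
  tr p.1 u p'.1 ∧ p'.2 = PostSet tr p.2 ∩ {x'' | dist (H p'.1) (H x'') ≤ δ}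

/-- Reachable states of the δ-approximate current-state estimator. -/
def CurEstReach [MetricSpace Y] (X0 : Set X) (tr : X → U → X → Prop) (H : X → Y)
    (δ : ℝ) : Set (X × Set X) :=
  {p | ∃ (n : ℕ) (pr : ℕ → X × Set X) (u : ℕ → U), pr 0 ∈ CurEstInit X0 H δ ∧
    (∀ i < n, CurEstTr tr H δ (pr i) (u i) (pr (i + 1))) ∧ pr n = p}

/-- ε-approximate initial-state opacity preserving simulation relation from
system `a` to system `b`. -/
def InitSOPSim [MetricSpace Y] (Xa0 XaS : Set Xa) (tra : Xa → Ua → Xa → Prop)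
    (Ha : Xa → Y) (Xb0 XbS : Set Xb) (trb : Xb → Ub → Xb → Prop) (Hb : Xb → Y)
    (ε : ℝ) (R : Set (Xa × Xb)) : Prop :=
  (∀ xa0 ∈ Xa0 ∩ XaS, ∃ xb0 ∈ Xb0 ∩ XbS, (xa0, xb0) ∈ R) ∧
  (∀ xb0 ∈ Xb0 \ XbS, ∃ xa0 ∈ Xa0 \ XaS, (xa0, xb0) ∈ R) ∧
  (∀ p ∈ R, dist (Ha p.1) (Hb p.2) ≤ ε) ∧
  (∀ p ∈ R, ∀ (ua : Ua) (xa' : Xa), tra p.1 ua xa' →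
    ∃ (ub : Ub) (xb' : Xb), trb p.2 ub xb' ∧ (xa', xb') ∈ R) ∧
  (∀ p ∈ R, ∀ (ub : Ub) (xb' : Xb), trb p.2 ub xb' →
    ∃ (ua : Ua) (xa' : Xa), tra p.1 ua xa' ∧ (xa', xb') ∈ R)

/-- ε-approximate current-state opacity preserving simulation relation from
system `a` to system `b`. -/
def CurSOPSim [MetricSpace Y] (Xa0 XaS : Set Xa) (tra : Xa → Ua → Xa → Prop)
    (Ha : Xa → Y) (Xb0 XbS : Set Xb) (trb : Xb → Ub → Xb → Prop) (Hb : Xb → Y)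
    (ε : ℝ) (R : Set (Xa × Xb)) : Prop :=
  (∀ xa0 ∈ Xa0, ∃ xb0 ∈ Xb0, (xa0, xb0) ∈ R) ∧
  (∀ p ∈ R, dist (Ha p.1) (Hb p.2) ≤ ε) ∧
  (∀ p ∈ R, ∀ (ua : Ua) (xa' : Xa), tra p.1 ua xa' →
    ∃ (ub : Ub) (xb' : Xb), trb p.2 ub xb' ∧ (xa', xb') ∈ R) ∧
  (∀ p ∈ R, ∀ (ua : Ua) (xa' : Xa), tra p.1 ua xa' → xa' ∈ XaS →
    ∃ (ub : Ub) (xb' : Xb), trb p.2 ub xb' ∧ xb' ∈ XbS ∧ (xa', xb') ∈ R) ∧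
  (∀ p ∈ R, ∀ (ub : Ub) (xb' : Xb), trb p.2 ub xb' →
    ∃ (ua : Ua) (xa' : Xa), tra p.1 ua xa' ∧ (xa', xb') ∈ R) ∧
  (∀ p ∈ R, ∀ (ub : Ub) (xb' : Xb), trb p.2 ub xb' → xb' ∉ XbS →
    ∃ (ua : Ua) (xa' : Xa), tra p.1 ua xa' ∧ xa' ∉ XaS ∧ (xa', xb') ∈ R)

/-- ε-approximate infinite-step opacity preserving simulation relation:
simultaneously an ε-InitSOP and an ε-CurSOP simulation relation. -/
def InfSOPSim [MetricSpace Y] (Xa0 XaS : Set Xa) (tra : Xa → Ua → Xa → Prop)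
    (Ha : Xa → Y) (Xb0 XbS : Set Xb) (trb : Xb → Ub → Xb → Prop) (Hb : Xb → Y)
    (ε : ℝ) (R : Set (Xa × Xb)) : Prop :=
  InitSOPSim Xa0 XaS tra Ha Xb0 XbS trb Hb ε R ∧
  CurSOPSim Xa0 XaS tra Ha Xb0 XbS trb Hb ε R

end OpacityDefs


/-- Auxiliary: lift a run through a simulation relation. -/
lemma run_lift_aux {Xa Ua Xb Ub : Type*} (tra : Xa → Ua → Xa → Prop)
    (trb : Xb → Ub → Xb → Prop) (R : Set (Xa × Xb))
    (hR : ∀ p ∈ R, ∀ (ua : Ua) (xa' : Xa), tra p.1 ua xa' →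
      ∃ (ub : Ub) (xb' : Xb), trb p.2 ub xb' ∧ (xa', xb') ∈ R) :
    ∀ (n : ℕ) (x : ℕ → Xa) (yb0 : Xb), (x 0, yb0) ∈ R → IsRun tra n x →
      ∃ y : ℕ → Xb, y 0 = yb0 ∧ IsRun trb n y ∧ ∀ i ≤ n, (x i, y i) ∈ R := by
  intro n
  induction n with
  | zero =>
    intro x yb0 h0 _
    refine ⟨fun _ => yb0, rfl, fun i hi => absurd hi (by omega), ?_⟩
    intro i hi
    interval_cases i
    exact h0
  | succ n ih =>
    intro x yb0 h0 hrun
    obtain ⟨y, hy0, hyrun, hyR⟩ := ih x yb0 h0 (fun i hi => hrun i (by omega))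
    obtain ⟨u, hu⟩ := hrun n (by omega)
    obtain ⟨ub, xb', htr, hR'⟩ := hR _ (hyR n le_rfl) u _ hu
    refine ⟨fun i => if i < n + 1 then y i else xb', by simp [hy0], ?_, ?_⟩
    · intro i hi
      rcases lt_or_ge i n with h | h
      · obtain ⟨v, hv⟩ := hyrun i h
        exact ⟨v, by simp only [if_pos (by omega : i < n + 1),
          if_pos (by omega : i + 1 < n + 1)]; exact hv⟩
      · have : i = n := by omega
        subst this
        exact ⟨ub, by simpa using htr⟩
    · intro i hi
      rcases lt_or_ge i (n + 1) with h | h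
      · simpa only [if_pos h] using hyR i (by omega)
      · have : i = n + 1 := by omega
        subst this
        simpa using hR'

/-- Theorem 5.1: opacity transfer via ε-InitSOP simulation. -/
theorem initSOP_sim_transfer {Xa Ua Xb Ub Y : Type*} [MetricSpace Y]
    (Xa0 XaS : Set Xa) (tra : Xa → Ua → Xa → Prop) (Ha : Xa → Y)
    (Xb0 XbS : Set Xb) (trb : Xb → Ub → Xb → Prop) (Hb : Xb → Y)
    {ε δ : ℝ} (hε : 0 ≤ ε) (hεδ : ε ≤ δ / 2)
    (hsim : ∃ R : Set (Xa × Xb), InitSOPSim Xa0 XaS tra Ha Xb0 XbS trb Hb ε R)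
    (hb : ApproxInitOpaque Xb0 XbS trb Hb (δ - 2 * ε)) :
    ApproxInitOpaque Xa0 XaS tra Ha δ := by
  obtain ⟨R, h1a, h1b, h2, h3a, h3b⟩ := hsim
  intro n x hx0 hxrun
  -- lift the secret run of S_a to S_b
  obtain ⟨xb0, hxb0, hRab⟩ := h1a _ hx0
  obtain ⟨y, hy0, hyrun, hyR⟩ := run_lift_aux tra trb R h3a n x xb0 hRab hxrun
  -- apply opacity of S_b
  obtain ⟨y', hy'0, hy'run, hy'dist⟩ := hb n y (hy0 ▸ hxb0) hyrun
  -- pull the non-secret run back to S_a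
  obtain ⟨xa0, hxa0, hRba⟩ := h1b _ hy'0
  obtain ⟨x', hx'0, hx'run, hx'R⟩ :=
    run_lift_aux trb tra {p : Xb × Xa | (p.2, p.1) ∈ R}
      (fun p hp ub xb' htr => by
        obtain ⟨ua, xa', h, hR'⟩ := h3b (p.2, p.1) hp ub xb' htr
        exact ⟨ua, xa', h, hR'⟩)
      n y' xa0 hRba hy'run
  refine ⟨x', hx'0 ▸ hxa0, hx'run, ?_⟩
  intro i hi
  calc dist (Ha (x i)) (Ha (x' i))
      ≤ dist (Ha (x i)) (Hb (y i)) + dist (Hb (y i)) (Hb (y' i))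
        + dist (Hb (y' i)) (Ha (x' i)) := dist_triangle4 _ _ _ _
    _ ≤ ε + (δ - 2 * ε) + ε := by
        refine add_le_add (add_le_add (h2 _ (hyR i hi)) (hy'dist i hi)) ?_
        rw [dist_comm]
        exact h2 _ (hx'R i hi)
    _ = δ := by ring
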